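/- Let (Ω, Σ, μ) be a probability space and n a positive integer. For j = 1, 2 let a_j : Ω → M_n(ℂ) be Bochner integrable maps and let e_j : Ω → M_n(ℂ) be measurable maps such that for μ-almost every ω, e_j(ω) is a partial isometry and Re tr(e_j(ω) a_j(ω)) = ‖a_j(ω)‖₁, where ‖·‖₁ is the trace norm. For a measurable essentially bounded f : Ω → M_n(ℂ) define N(f)² = Σ_{j=1}^{2} ∫_Ω Re tr( ( f(ω) f(ω)ᴴ e_j(ω) + e_j(ω) f(ω)ᴴ f(ω) ) a_j(ω) / 2 ) dμ(ω). Then the supremum of N(f) over all measurable f : Ω → M_n(ℂ) with ‖f(ω)‖ ≤ 1 (ℓ²-operator norm) for μ-almost every ω is attained: there exists a measurable f₀ with ‖f₀(ω)‖ ≤ 1 μ-almost everywhere such that N(f₀) = sup{ N(f) : f measurable, ‖f(ω)‖ ≤ 1 μ-a.e. }. -/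

import Mathlib

open scoped Matrix.Norms.L2Operator ComplexOrder
open Matrix MeasureTheory

/-- The Borel σ-algebra on `M_n(ℂ)` coming from its (norm) topology. -/
noncomputable instance matrixMeasurableSpace (n : ℕ) : MeasurableSpace (Matrix (Fin n) (Fin n) ℂ) :=
  borel _

instance matrixBorelSpace (n : ℕ) : BorelSpace (Matrix (Fin n) (Fin n) ℂ) := ⟨rfl⟩

/-- The trace norm `‖a‖₁ = tr((aᴴ a)^{1/2})` of a complex matrix. -/
noncomputable def traceNorm {n : ℕ} (a : Matrix (Fin n) (Fin n) ℂ) : ℝ :=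
  (((Matrix.posSemidef_conjTranspose_mul_self a).1.eigenvectorUnitary : Matrix (Fin n) (Fin n) ℂ) *
    diagonal ((fun x : ℝ => (x : ℂ)) ∘ Real.sqrt ∘ (Matrix.posSemidef_conjTranspose_mul_self a).1.eigenvalues) *
    (star (Matrix.posSemidef_conjTranspose_mul_self a).1.eigenvectorUnitary :
      Matrix (Fin n) (Fin n) ℂ)).trace.re

/-- The pre-Hilbert seminorm `N(f) = ‖f‖_{g₁,g₂}` on `L^∞(μ, M_n(ℂ))` associated with the
normal functionals `g_j` represented by the integrable matrix fields `a_j` (with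
norm-attaining partial isometry fields `e_j`):
`N(f)² = Σ_j ∫ Re tr((f fᴴ e_j + e_j fᴴ f) a_j / 2) dμ`. -/
noncomputable def Nseminorm {Ω : Type*} [MeasurableSpace Ω] (μ : Measure Ω) {n : ℕ}
    (a e : Fin 2 → Ω → Matrix (Fin n) (Fin n) ℂ)
    (f : Ω → Matrix (Fin n) (Fin n) ℂ) : ℝ :=
  Real.sqrt (∑ j : Fin 2, ∫ ω,
    (((f ω * (f ω)ᴴ * e j ω + e j ω * (f ω)ᴴ * f ω) * a j ω).trace).re / 2 ∂μ)

/-! Trace duality `Re tr(m a) ≤ ‖m‖ ‖a‖₁` is checked in an orthonormal eigenbasis `vᵢ` of `aᴴ a`,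
where `‖a vᵢ‖ = √λᵢ` and `‖a‖₁ = ∑ √λᵢ`. A partial isometry `e` has norm at most `1` (`eᴴ e` is a
projection), so for `‖f‖ ≤ 1` the element `f fᴴ e + e fᴴ f` has norm at most `2` and every
integrand of `N(f)²` is bounded by `‖a_j(ω)‖₁`. For `f = 1` the integrand is
`Re tr(e_j a_j) = ‖a_j‖₁`, so the constant function `1` attains the supremum. -/

theorem norm_le_one_of_mul_star_mul_self {E : Type*} [NonUnitalNormedRing E] [StarRing E]
    [CStarRing E] {e : E} (h : e * star e * e = e) : ‖e‖ ≤ 1 := by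
  have hp : IsStarProjection (star e * e) :=
    ⟨by rw [IsIdempotentElem, mul_assoc, ← mul_assoc e, h], .star_mul_self e⟩
  have := hp.norm_le
  rw [CStarRing.norm_star_mul_self] at this
  nlinarith [norm_nonneg e]

theorem norm_mul_star_mul_add_mul_star_mul_le_two {E : Type*} [NonUnitalNormedRing E] [StarRing E]
    [NormedStarGroup E] {e f : E} (he : ‖e‖ ≤ 1) (hf : ‖f‖ ≤ 1) :
    ‖f * star f * e + e * star f * f‖ ≤ 2 := by
  have hf' : ‖star f‖ ≤ 1 := (norm_star f).trans_le hf
  calc ‖f * star f * e + e * star f * f‖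
      ≤ ‖f‖ * ‖star f‖ * ‖e‖ + ‖e‖ * ‖star f‖ * ‖f‖ :=
        (norm_add_le _ _).trans (add_le_add norm_mul₃_le norm_mul₃_le)
    _ ≤ 1 * 1 * 1 + 1 * 1 * 1 := by gcongr
    _ = 2 := by norm_num

namespace Matrix

section
variable {𝕜 ι : Type*} [RCLike 𝕜] [Fintype ι] [DecidableEq ι]

theorem trace_eq_sum_inner_toEuclideanLin (A : Matrix ι ι 𝕜)
    (b : OrthonormalBasis ι 𝕜 (EuclideanSpace 𝕜 ι)) :
    A.trace = ∑ i, inner 𝕜 (b i) (toEuclideanLin A (b i)) := by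
  rw [← LinearMap.trace_eq_sum_inner, toEuclideanLin_eq_toLin_orthonormal, trace_toLin_eq]

theorem norm_toEuclideanLin_le (A : Matrix ι ι 𝕜) (x : EuclideanSpace 𝕜 ι) :
    ‖toEuclideanLin A x‖ ≤ ‖A‖ * ‖x‖ :=
  l2_opNorm_mulVec A x

theorem norm_toEuclideanLin_eigenvectorBasis (A : Matrix ι ι 𝕜) (i : ι) :
    ‖toEuclideanLin A ((posSemidef_conjTranspose_mul_self A).1.eigenvectorBasis i)‖ =
      √((posSemidef_conjTranspose_mul_self A).1.eigenvalues i) := by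
  set hA := (posSemidef_conjTranspose_mul_self A).1
  rw [hA.eigenvalues_eq, ← Real.sqrt_sq (norm_nonneg _), ← mulVec_mulVec, dotProduct_mulVec,
    ← star_mulVec, @norm_sq_eq_re_inner 𝕜, EuclideanSpace.inner_eq_star_dotProduct, dotProduct_comm]
  rfl

end

variable {n : ℕ}

theorem traceNorm_eq_sum_sqrt_eigenvalues (a : Matrix (Fin n) (Fin n) ℂ) :
    traceNorm a = ∑ i, √((posSemidef_conjTranspose_mul_self a).1.eigenvalues i) := by
  rw [traceNorm, trace_mul_comm, ← mul_assoc, Unitary.coe_star_mul_self, one_mul, trace_diagonal,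
    Complex.re_sum]
  simp

theorem traceNorm_nonneg (a : Matrix (Fin n) (Fin n) ℂ) : 0 ≤ traceNorm a := by
  rw [traceNorm_eq_sum_sqrt_eigenvalues]
  exact Finset.sum_nonneg fun _ _ => Real.sqrt_nonneg _

theorem re_trace_mul_le_norm_mul_traceNorm (m a : Matrix (Fin n) (Fin n) ℂ) :
    (m * a).trace.re ≤ ‖m‖ * traceNorm a := by
  set hA := (posSemidef_conjTranspose_mul_self a).1
  rw [trace_eq_sum_inner_toEuclideanLin _ hA.eigenvectorBasis, Complex.re_sum,
    traceNorm_eq_sum_sqrt_eigenvalues, Finset.mul_sum]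
  refine Finset.sum_le_sum fun i _ => ?_
  set v := hA.eigenvectorBasis i
  calc (inner ℂ v (toEuclideanLin (m * a) v)).re ≤ ‖v‖ * ‖toEuclideanLin (m * a) v‖ :=
        (Complex.re_le_norm _).trans (norm_inner_le_norm _ _)
    _ = ‖toEuclideanLin m (toEuclideanLin a v)‖ := by
        rw [hA.eigenvectorBasis.orthonormal.1 i, one_mul, toLpLin_mul_same, LinearMap.comp_apply]
    _ ≤ ‖m‖ * √(hA.eigenvalues i) := by
        rw [← norm_toEuclideanLin_eigenvectorBasis]; exact norm_toEuclideanLin_le m _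

end Matrix

section
variable {n : ℕ}

/-- `(f fᴴ e + e fᴴ f) / 2` is the Jordan triple product `{f, f, e}`. -/
theorem re_trace_triple_le_traceNorm {e f a : Matrix (Fin n) (Fin n) ℂ} (he : e * eᴴ * e = e)
    (hf : ‖f‖ ≤ 1) : ((f * fᴴ * e + e * fᴴ * f) * a).trace.re / 2 ≤ traceNorm a := by
  have hnorm : ‖f * fᴴ * e + e * fᴴ * f‖ ≤ 2 :=
    norm_mul_star_mul_add_mul_star_mul_le_two (norm_le_one_of_mul_star_mul_self he) hf
  calc ((f * fᴴ * e + e * fᴴ * f) * a).trace.re / 2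
      ≤ ‖f * fᴴ * e + e * fᴴ * f‖ * traceNorm a / 2 := by
        gcongr; exact re_trace_mul_le_norm_mul_traceNorm _ a
    _ ≤ 2 * traceNorm a / 2 := by gcongr; exact traceNorm_nonneg a
    _ = traceNorm a := by ring

theorem re_trace_triple_one (e a : Matrix (Fin n) (Fin n) ℂ) :
    ((1 * 1ᴴ * e + e * 1ᴴ * 1) * a).trace.re / 2 = (e * a).trace.re := by
  rw [conjTranspose_one, one_mul, one_mul, mul_one, mul_one, add_mul, trace_add, Complex.add_re]
  ring

theorem integrable_re_trace_triple {Ω : Type*} [MeasurableSpace Ω] {μ : Measure Ω}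
    {e f a : Ω → Matrix (Fin n) (Fin n) ℂ} (he : Measurable e) (he1 : ∀ᵐ ω ∂μ, ‖e ω‖ ≤ 1)
    (hf : Measurable f) (hf1 : ∀ᵐ ω ∂μ, ‖f ω‖ ≤ 1) (ha : Integrable a μ) :
    Integrable (fun ω => ((f ω * (f ω)ᴴ * e ω + e ω * (f ω)ᴴ * f ω) * a ω).trace.re / 2) μ := by
  have hcont : Continuous fun p : Matrix (Fin n) (Fin n) ℂ × Matrix (Fin n) (Fin n) ℂ =>
      p.1 * p.1ᴴ * p.2 + p.2 * p.1ᴴ * p.1 :=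
    ((continuous_fst.mul continuous_fst.star).mul continuous_snd).add
      ((continuous_snd.mul continuous_fst.star).mul continuous_fst)
  have hb : AEStronglyMeasurable (fun ω => f ω * (f ω)ᴴ * e ω + e ω * (f ω)ᴴ * f ω) μ :=
    hcont.comp_aestronglyMeasurable (f := fun ω => (f ω, e ω))
      (hf.aestronglyMeasurable.prodMk he.aestronglyMeasurable)
  have hba := ha.bdd_smul 2 hb (by
    filter_upwards [he1, hf1] with ω he hf
    exact norm_mul_star_mul_add_mul_star_mul_le_two he hf)
  exact (((traceLinearMap (Fin n) ℂ ℂ).toContinuousLinearMap.integrable_comp hba).re).div_const 2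

end

theorem Nseminorm_attains_sup_general {Ω : Type*} [MeasurableSpace Ω]
    (μ : Measure Ω) (n : ℕ)
    (a e : Fin 2 → Ω → Matrix (Fin n) (Fin n) ℂ)
    (ha : ∀ j, Integrable (a j) μ)
    (he : ∀ j, Measurable (e j))
    (hae : ∀ j, ∀ᵐ ω ∂μ,
      e j ω * (e j ω)ᴴ * e j ω = e j ω ∧
      ((e j ω * a j ω).trace).re = traceNorm (a j ω)) :
    ∃ f₀ : Ω → Matrix (Fin n) (Fin n) ℂ,
      Measurable f₀ ∧ (∀ᵐ ω ∂μ, ‖f₀ ω‖ ≤ 1) ∧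
      ∀ f : Ω → Matrix (Fin n) (Fin n) ℂ, Measurable f → (∀ᵐ ω ∂μ, ‖f ω‖ ≤ 1) →
        Nseminorm μ a e f ≤ Nseminorm μ a e f₀ := by
  have he1 (j : Fin 2) : ∀ᵐ ω ∂μ, ‖e j ω‖ ≤ 1 :=
    (hae j).mono fun _ h => norm_le_one_of_mul_star_mul_self h.1
  have hone : ∀ᵐ _ ∂μ, ‖(1 : Matrix (Fin n) (Fin n) ℂ)‖ ≤ 1 :=
    .of_forall fun _ => IsStarProjection.norm_le _ (.one _)
  refine ⟨fun _ => 1, measurable_const, hone, fun f hf hf1 => ?_⟩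
  refine Real.sqrt_le_sqrt (Finset.sum_le_sum fun j _ => integral_mono_ae
    (integrable_re_trace_triple (he j) (he1 j) hf hf1 (ha j))
    (integrable_re_trace_triple (he j) (he1 j) measurable_const hone (ha j)) ?_)
  filter_upwards [hf1, hae j] with ω hfω ⟨htrip, hnorm⟩
  rw [re_trace_triple_one, hnorm]
  exact re_trace_triple_le_traceNorm htrip hfω

/-- Norm-attainment of the seminorms `‖·‖_{g₁,g₂}` on the closed unit ball of
`L^∞(μ, M_n(ℂ))`: the supremum of `N(f)` over all measurable `f` with `‖f(ω)‖ ≤ 1`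
(ℓ²-operator norm) almost everywhere is attained. -/
theorem Nseminorm_attains_sup {Ω : Type*} [MeasurableSpace Ω]
    (μ : Measure Ω) [IsProbabilityMeasure μ] (n : ℕ) (hn : 0 < n)
    (a e : Fin 2 → Ω → Matrix (Fin n) (Fin n) ℂ)
    (ha : ∀ j, Integrable (a j) μ)
    (he : ∀ j, Measurable (e j))
    (hae : ∀ j, ∀ᵐ ω ∂μ,
      e j ω * (e j ω)ᴴ * e j ω = e j ω ∧
      ((e j ω * a j ω).trace).re = traceNorm (a j ω)) :
    ∃ f₀ : Ω → Matrix (Fin n) (Fin n) ℂ,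
      Measurable f₀ ∧ (∀ᵐ ω ∂μ, ‖f₀ ω‖ ≤ 1) ∧
      ∀ f : Ω → Matrix (Fin n) (Fin n) ℂ, Measurable f → (∀ᵐ ω ∂μ, ‖f ω‖ ≤ 1) →
        Nseminorm μ a e f ≤ Nseminorm μ a e f₀ :=
  Nseminorm_attains_sup_general μ n a e ha he hae
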